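/- arXiv:0905.2745 — 5 statements merged into one kernel-verified Lean document; each statement's English description precedes it below -/
import Mathlib

section
/- Suppose p ∈ L is divisible by u (every monomial of p has u-exponent at least 1). Let p̂ be obtained from p by deleting every monomial uʳzˢ that does not satisfy both 1 ≤ r ≤ ⌊(2j−2)/k⌋ and kr−j+1 ≤ s ≤ j−1. Then there exist a polynomial a ∈ ℂ[z,u] and a V-holomorphic element b ∈ L such that p − p̂ = zʲ·a + z⁻ʲ·b. (This is the statement that every u-divisible extension class on Z_k has the canonical polynomial normal form p̂, since adding zʲ·(U-holomorphic) + z⁻ʲ·(V-holomorphic) terms does not change the extension.) -/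
noncomputable section

/-- `L = ℂ[z,z⁻¹][u]`: Laurent polynomials in `z` with polynomial coefficients in `u`,
realised as the algebra of finitely supported ℂ-linear combinations of monomials on the
exponent monoid `ℤ × ℕ`, where `(s, r)` is the exponent of the monomial `zˢuʳ`. -/
abbrev L : Type := AddMonoidAlgebra ℂ (ℤ × ℕ)

/-- The monomial `zˢ` (`s ∈ ℤ`). -/
def zp (s : ℤ) : L := AddMonoidAlgebra.single (s, 0) 1

/-- The monomial `u`. -/
def uu : L := AddMonoidAlgebra.single (0, 1) 1

/-- `f` is V-holomorphic: every monomial `zˢuʳ` occurring in `f` satisfies `s ≤ k·r`,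
i.e. `f` is holomorphic in the coordinates `(z⁻¹, zᵏu)` of the chart `V` of `Z_k`. -/
def VHol (k : ℕ) (f : L) : Prop := ∀ (s : ℤ) (r : ℕ), f.coeff (s, r) ≠ 0 → s ≤ (k : ℤ) * r

/-- `f` lies in `ℂ[z,u] ⊆ L`, i.e. is holomorphic on the chart `U`. -/
def MemPolyRing (f : L) : Prop := ∀ (s : ℤ) (r : ℕ), f.coeff (s, r) ≠ 0 → 0 ≤ s

/-!
Split `q = p − p̂` into its monomials `zˢuʳ` with `s ≥ j`, which are `zʲ` times a polynomial, and
those with `s < j`, which are `z⁻ʲ` times `zˢ⁺ʲuʳ`. The latter is V-holomorphic as soon as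
`s + j ≤ kr`. For a monomial of `q` with `s ≤ j − 1` and `r ≥ 1` outside the canonical range,
either `r > ⌊(2j−2)/k⌋`, so that `kr ≥ 2j − 1 ≥ s + j`, or `s ≤ kr − j` directly.
-/

lemma coeff_zp_mul (c : ℤ) (f : L) (s : ℤ) (r : ℕ) :
    (zp c * f).coeff (s, r) = f.coeff (s - c, r) := by
  have hsplit : ((s, r) : ℤ × ℕ) = (c, 0) + (s - c, r) := by ext <;> simp
  rw [hsplit, zp, AddMonoidAlgebra.coeff_single_mul_add, one_mul]

lemma zp_mul_zp (a b : ℤ) : zp a * zp b = zp (a + b) := by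
  simp [zp, AddMonoidAlgebra.single_mul_single]

lemma zp_zero : zp 0 = 1 := rfl

theorem exists_eq_zp_mul_add_zp_neg_mul (k : ℕ) (j : ℤ) (q : L)
    (hq : ∀ (s : ℤ) (r : ℕ), q.coeff (s, r) ≠ 0 → s < j → s + j ≤ k * r) :
    ∃ a b : L, MemPolyRing a ∧ VHol k b ∧ q = zp j * a + zp (-j) * b := by
  classical
  set high : L := .ofCoeff (q.coeff.filter (j ≤ ·.1))
  set low : L := .ofCoeff (q.coeff.filter (¬ j ≤ ·.1))
  refine ⟨zp (-j) * high, zp j * low, fun s r h => ?_, fun s r h => ?_, ?_⟩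
  · rw [coeff_zp_mul, AddMonoidAlgebra.coeff_ofCoeff, Finsupp.filter_apply] at h
    have hj := (ite_ne_right_iff.mp h).1
    omega
  · rw [coeff_zp_mul, AddMonoidAlgebra.coeff_ofCoeff, Finsupp.filter_apply] at h
    obtain ⟨hj, h⟩ := ite_ne_right_iff.mp h
    have := hq _ _ h (not_le.mp hj)
    omega
  · rw [← mul_assoc, ← mul_assoc, zp_mul_zp, zp_mul_zp, add_neg_cancel, neg_add_cancel, zp_zero,
      one_mul, one_mul, ← AddMonoidAlgebra.ofCoeff_add, Finsupp.filter_add_filter_not,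
      AddMonoidAlgebra.ofCoeff_coeff]

def IsCanonicalExponent (k j : ℕ) (s : ℤ) (r : ℕ) : Prop :=
  1 ≤ r ∧ (r : ℤ) ≤ (2 * (j : ℤ) - 2) / (k : ℤ) ∧ (k : ℤ) * r - (j : ℤ) + 1 ≤ s ∧ s ≤ (j : ℤ) - 1

lemma add_le_mul_of_not_isCanonicalExponent {k j : ℕ} {s : ℤ} {r : ℕ} (hk : 0 < k) (hr : 1 ≤ r)
    (hs : s < j) (h : ¬IsCanonicalExponent k j s r) : s + j ≤ k * r := by
  unfold IsCanonicalExponent at h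
  by_cases hrj : (r : ℤ) ≤ (2 * (j : ℤ) - 2) / (k : ℤ)
  · have : ¬(k : ℤ) * r - j + 1 ≤ s := fun h' => h ⟨hr, hrj, h', by omega⟩
    omega
  · have : 2 * (j : ℤ) - 2 < r * k :=
      (Int.ediv_lt_iff_lt_mul (by exact_mod_cast hk)).mp (not_le.mp hrj)
    linarith

/-- If `p ∈ L` is divisible by `u`, and `p̂` is obtained from `p` by deleting
every monomial `uʳzˢ` not satisfying `1 ≤ r ≤ ⌊(2j−2)/k⌋` and `kr−j+1 ≤ s ≤ j−1`, then
`p − p̂ = zʲ·a + z⁻ʲ·b` for some polynomial `a ∈ ℂ[z,u]` and some V-holomorphic `b ∈ L`. -/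
theorem canonical_normal_form (k : ℕ) (hk : 1 ≤ k) (j : ℕ) (p phat : L)
    (hu : ∀ (s : ℤ) (r : ℕ), p.coeff (s, r) ≠ 0 → 1 ≤ r)
    (hphat : ∀ (s : ℤ) (r : ℕ),
      phat.coeff (s, r) =
        if 1 ≤ r ∧ (r : ℤ) ≤ (2 * (j : ℤ) - 2) / (k : ℤ) ∧
            (k : ℤ) * r - (j : ℤ) + 1 ≤ s ∧ s ≤ (j : ℤ) - 1
        then p.coeff (s, r) else 0) :
    ∃ a b : L, MemPolyRing a ∧ VHol k b ∧ p - phat = zp j * a + zp (-(j : ℤ)) * b := by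
  refine exists_eq_zp_mul_add_zp_neg_mul k j (p - phat) fun s r hsr hs => ?_
  rw [AddMonoidAlgebra.coeff_sub, Finsupp.sub_apply, hphat] at hsr
  split_ifs at hsr with hc
  · exact absurd (sub_self _) hsr
  · rw [sub_zero] at hsr
    exact add_le_mul_of_not_isCanonicalExponent hk (hu s r hsr) hs hc
end
end

section
/- Let p ∈ L be nonzero, and let min_u(p) be the minimal u-exponent among the monomials of p. Let a = Σ_{r,s≥0} a_{rs} uʳzˢ and b = Σ_{r,s≥0} b_{rs} uʳzˢ be formal power series in ℂ[[z,u]], and suppose that the formal series zʲ·a + p·b is V-holomorphic (every monomial zˢuʳ occurring in it satisfies s ≤ k·r). Then for every r < min_u(p) and every s, a_{rs} ≠ 0 implies 0 ≤ s ≤ kr − j; in particular, if kr − j < 0 then the u-degree-r part of a vanishes. -/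
noncomputable section

/-- Formal series in the monomials `zˢuʳ` (`s ∈ ℤ`, `r ∈ ℕ`), as coefficient functions. -/
abbrev FS : Type := ℤ × ℕ → ℂ

/-- The product of a Laurent polynomial `p ∈ L` with a formal series: for each monomial only
finitely many terms of `p` contribute, so the product is a well-defined formal series. -/
def mulL (p : L) (f : FS) : FS := fun m =>
  ∑ e ∈ Finsupp.support p.coeff, if e.2 ≤ m.2 then p.coeff e * f (m.1 - e.1, m.2 - e.2) else 0

/-- Multiplication of a formal series by `zᵗ` (`t ∈ ℤ`). -/
def shiftz (t : ℤ) (f : FS) : FS := fun m => f (m.1 - t, m.2)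

/-- A formal series is V-holomorphic if every occurring monomial `zˢuʳ` satisfies `s ≤ k·r`. -/
def VHolF (k : ℕ) (f : FS) : Prop := ∀ (s : ℤ) (r : ℕ), f (s, r) ≠ 0 → s ≤ (k : ℤ) * r

/-- A formal series lies in `ℂ[[z,u]]`: no negative powers of `z` occur. -/
def MemPS (f : FS) : Prop := ∀ (s : ℤ) (r : ℕ), s < 0 → f (s, r) = 0

/-! Below the minimal `u`-degree of `p` the product `p·b` has no monomials, so in `u`-degree
`r < min_u(p)` the series `zʲ·a + p·b` is just `zʲ·a_r`, and V-holomorphy bounds the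
`z`-exponents of `a_r` by `kr - j`. -/

theorem MemPS.nonneg_of_ne_zero {f : FS} (hf : MemPS f) {s : ℤ} {r : ℕ} (h : f (s, r) ≠ 0) :
    0 ≤ s :=
  not_lt.mp fun hs => h (hf s r hs)

theorem shiftz_apply_add (t : ℤ) (f : FS) (s : ℤ) (r : ℕ) : shiftz t f (s + t, r) = f (s, r) := by
  simp [shiftz]

theorem mulL_apply_eq_zero_of_lt {p : L} {mu : ℕ}
    (hmu : ∀ (s : ℤ) (r : ℕ), p.coeff (s, r) ≠ 0 → mu ≤ r) (f : FS) (s : ℤ) {r : ℕ}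
    (hr : r < mu) : mulL p f (s, r) = 0 := by
  refine Finset.sum_eq_zero fun e he => if_neg ?_
  have : mu ≤ e.2 := hmu e.1 e.2 (Finsupp.mem_support_iff.mp he)
  omega

theorem a_support_bound_below_min_u_general (k : ℕ) (j : ℕ) (p : L)
    (mu : ℕ)
    (hmu_min : ∀ (s : ℤ) (r : ℕ), p.coeff (s, r) ≠ 0 → mu ≤ r)
    (a b : FS) (ha : MemPS a)
    (hV : VHolF k (shiftz (j : ℤ) a + mulL p b)) :
    ∀ (r : ℕ) (s : ℤ), r < mu → a (s, r) ≠ 0 → 0 ≤ s ∧ s ≤ (k : ℤ) * r - j := by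
  intro r s hr has
  have hcoeff : (shiftz (j : ℤ) a + mulL p b) (s + j, r) = a (s, r) := by
    rw [Pi.add_apply, shiftz_apply_add, mulL_apply_eq_zero_of_lt hmu_min b _ hr, add_zero]
  have hbound := hV (s + j) r (hcoeff ▸ has)
  exact ⟨ha.nonneg_of_ne_zero has, by omega⟩

/-- Let `p ∈ L` be nonzero with minimal u-exponent `mu`. If `a, b ∈ ℂ[[z,u]]`
and `zʲ·a + p·b` is V-holomorphic, then for `r < mu`, `a_{rs} ≠ 0` implies `0 ≤ s ≤ kr − j`. -/
theorem a_support_bound_below_min_u (k : ℕ) (hk : 1 ≤ k) (j : ℕ) (p : L) (hp : p ≠ 0)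
    (mu : ℕ)
    (hmu_mem : ∃ s : ℤ, p.coeff (s, mu) ≠ 0)
    (hmu_min : ∀ (s : ℤ) (r : ℕ), p.coeff (s, r) ≠ 0 → mu ≤ r)
    (a b : FS) (ha : MemPS a) (hb : MemPS b)
    (hV : VHolF k (shiftz (j : ℤ) a + mulL p b)) :
    ∀ (r : ℕ) (s : ℤ), r < mu → a (s, r) ≠ 0 → 0 ≤ s ∧ s ≤ (k : ℤ) * r - j :=
  a_support_bound_below_min_u_general k j p mu hmu_min a b ha hV
end
end

section
/- Let p ∈ L be nonzero, with min_u(p) its minimal u-exponent and max_z(p) its maximal z-exponent. Let a = Σ_{r,s≥0} a_{rs} uʳzˢ and b = Σ_{r,s≥0} b_{rs} uʳzˢ be formal power series in ℂ[[z,u]] such that z⁻ʲ·b is V-holomorphic and the formal series zʲ·a + p·b is V-holomorphic. Then for every r ≥ min_u(p) and every s, a_{rs} ≠ 0 implies 0 ≤ s ≤ max{ k(r − min_u(p)) + j + max{max_z(p), 0}, kr − j }. -/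
/-!
Look at the coefficient of `z^(s+j) uʳ` in `zʲ·a + p·b`. If `p·b` has no such monomial, this
coefficient is `a_{rs}`, and V-holomorphy of the sum gives `s ≤ kr − j`. Otherwise the monomial is
`zᵉ¹uᵉ²` from `p` times a monomial of `b`; since `mu ≤ e₂`, `e₁ ≤ Mz` and `z⁻ʲ·b` is
V-holomorphic, `s ≤ k(r − mu) + Mz`.
-/

noncomputable section

@[simp]
theorem shiftz_apply (t : ℤ) (f : FS) (s : ℤ) (r : ℕ) : shiftz t f (s, r) = f (s - t, r) := rfl

theorem VHolF.le_of_shiftz {k : ℕ} {t : ℤ} {f : FS} (hf : VHolF k (shiftz t f)) {s : ℤ} {r : ℕ}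
    (h : f (s, r) ≠ 0) : s + t ≤ (k : ℤ) * r :=
  hf (s + t) r (by simpa using h)

theorem exists_of_mulL_apply_ne_zero {p : L} {f : FS} {s : ℤ} {r : ℕ} (h : mulL p f (s, r) ≠ 0) :
    ∃ e : ℤ × ℕ, p.coeff e ≠ 0 ∧ e.2 ≤ r ∧ f (s - e.1, r - e.2) ≠ 0 := by
  obtain ⟨e, -, hterm⟩ := Finset.exists_ne_zero_of_sum_ne_zero h
  by_cases he : e.2 ≤ r
  · rw [if_pos he] at hterm
    exact ⟨e, left_ne_zero_of_mul hterm, he, right_ne_zero_of_mul hterm⟩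
  · exact absurd (if_neg he) hterm

theorem VHolF.mulL_apply_ne_zero_le {k : ℕ} {t : ℤ} {f : FS} (hf : VHolF k (shiftz t f))
    {p : L} {mu : ℕ} {Mz : ℤ} (hmu : ∀ (s : ℤ) (r : ℕ), p.coeff (s, r) ≠ 0 → mu ≤ r)
    (hMz : ∀ (s : ℤ) (r : ℕ), p.coeff (s, r) ≠ 0 → s ≤ Mz) {s : ℤ} {r : ℕ}
    (h : mulL p f (s, r) ≠ 0) : s + t ≤ (k : ℤ) * ((r : ℤ) - mu) + Mz := by
  obtain ⟨⟨e₁, e₂⟩, hpe, he₂, hfe⟩ := exists_of_mulL_apply_ne_zero h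
  have hfe_le := hf.le_of_shiftz hfe
  have hmu_le : (k : ℤ) * ((r : ℤ) - e₂) ≤ (k : ℤ) * ((r : ℤ) - mu) :=
    mul_le_mul_of_nonneg_left (by have := hmu e₁ e₂ hpe; omega) (by positivity)
  push_cast [he₂] at hfe_le
  have := hMz e₁ e₂ hpe
  omega

theorem a_support_bound_above_min_u_general (k : ℕ) (j : ℕ) (p : L)
    (mu : ℕ) (Mz : ℤ)
    (hmu_min : ∀ (s : ℤ) (r : ℕ), p.coeff (s, r) ≠ 0 → mu ≤ r)
    (hMz_max : ∀ (s : ℤ) (r : ℕ), p.coeff (s, r) ≠ 0 → s ≤ Mz)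
    (a b : FS) (ha : MemPS a)
    (hVb : VHolF k (shiftz (-(j : ℤ)) b))
    (hV : VHolF k (shiftz (j : ℤ) a + mulL p b)) :
    ∀ (r : ℕ) (s : ℤ), mu ≤ r → a (s, r) ≠ 0 →
      0 ≤ s ∧ s ≤ max ((k : ℤ) * ((r : ℤ) - mu) + j + max Mz 0) ((k : ℤ) * r - j) := by
  intro r s _ hne
  refine ⟨not_lt.1 fun hs => hne (ha s r hs), ?_⟩
  have hcoeff : (shiftz j a + mulL p b) (s + j, r) = a (s, r) + mulL p b (s + j, r) := by
    simp
  by_cases hpb : mulL p b (s + j, r) = 0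
  · have := hV (s + j) r (by rwa [hcoeff, hpb, add_zero])
    exact le_max_of_le_right (by omega)
  · have := hVb.mulL_apply_ne_zero_le hmu_min hMz_max hpb
    have := le_max_left Mz 0
    exact le_max_of_le_left (by omega)

/-- Let `p ∈ L` be nonzero with minimal u-exponent `mu` and maximal z-exponent
`Mz`. If `a, b ∈ ℂ[[z,u]]` are such that `z⁻ʲ·b` and `zʲ·a + p·b` are V-holomorphic, then for
`r ≥ mu`, `a_{rs} ≠ 0` implies `0 ≤ s ≤ max { k(r − mu) + j + max{Mz, 0}, kr − j }`. -/
theorem a_support_bound_above_min_u (k : ℕ) (hk : 1 ≤ k) (j : ℕ) (p : L) (hp : p ≠ 0)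
    (mu : ℕ) (Mz : ℤ)
    (hmu_mem : ∃ s : ℤ, p.coeff (s, mu) ≠ 0)
    (hmu_min : ∀ (s : ℤ) (r : ℕ), p.coeff (s, r) ≠ 0 → mu ≤ r)
    (hMz_mem : ∃ r : ℕ, p.coeff (Mz, r) ≠ 0)
    (hMz_max : ∀ (s : ℤ) (r : ℕ), p.coeff (s, r) ≠ 0 → s ≤ Mz)
    (a b : FS) (ha : MemPS a) (hb : MemPS b)
    (hVb : VHolF k (shiftz (-(j : ℤ)) b))
    (hV : VHolF k (shiftz (j : ℤ) a + mulL p b)) :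
    ∀ (r : ℕ) (s : ℤ), mu ≤ r → a (s, r) ≠ 0 →
      0 ≤ s ∧ s ≤ max ((k : ℤ) * ((r : ℤ) - mu) + j + max Mz 0) ((k : ℤ) * r - j) :=
  a_support_bound_above_min_u_general k j p mu Mz hmu_min hMz_max a b ha hVb hV
end
end

section
/- Let p ∈ L be divisible by u and such that z⁻ʲ·p is V-holomorphic (as holds for p in canonical normal form). Let a, b, c, d ∈ ℂ[[z,u]] be formal power series such that each of the four series a + zʲp·b + z⁻ʲp·c + p²·d, z²ʲ·b + zʲp·d, z⁻²ʲ·c + z⁻ʲp·d, and d is V-holomorphic (every occurring monomial zˢuʳ satisfies s ≤ kr). Then every monomial zˢuʳ occurring in d satisfies 0 ≤ s ≤ kr, and every monomial zˢuʳ occurring in c satisfies 0 ≤ s ≤ kr + 2j. (These are the support bounds on the last two components of a global holomorphic section of End E over the formal neighbourhood of the zero section.) -/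
noncomputable section

/- For `c`, the only obstruction is the term `z⁻ʲp·d` in the third entry: `z⁻ʲp` and `d` are both
V-holomorphic, hence so is their product, and then `z⁻²ʲ·c` must be V-holomorphic on its own. -/

theorem VHolF.mulL {k : ℕ} {q : L} {f : FS} (hq : VHol k q) (hf : VHolF k f) :
    VHolF k (mulL q f) := by
  intro s r h
  obtain ⟨e, -, hne⟩ := Finset.exists_ne_zero_of_sum_ne_zero h
  by_cases hle : e.2 ≤ r
  · rw [if_pos hle] at hne
    have hqe : e.1 ≤ (k : ℤ) * e.2 := hq e.1 e.2 (left_ne_zero_of_mul hne)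
    have hfe := hf _ _ (right_ne_zero_of_mul hne)
    push_cast [hle] at hfe
    linarith
  · exact absurd (if_neg hle) hne

theorem VHolF.of_add {k : ℕ} {f g : FS} (hfg : VHolF k (f + g)) (hg : VHolF k g) :
    VHolF k f := by
  intro s r hf
  by_cases hgs : g (s, r) = 0
  · exact hfg s r (by simpa [hgs] using hf)
  · exact hg s r hgs

theorem VHolF.of_shiftz {k : ℕ} {t : ℤ} {f : FS} (h : VHolF k (shiftz t f)) {s : ℤ} {r : ℕ}
    (hf : f (s, r) ≠ 0) : s + t ≤ (k : ℤ) * r :=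
  h (s + t) r (by simpa [shiftz] using hf)

theorem endE_section_support_bounds_general (k : ℕ) (j : ℕ) (p : L)
    (hpV : VHol k (zp (-(j : ℤ)) * p))
    (c d : FS) (hc : MemPS c) (hd : MemPS d)
    (h3 : VHolF k (shiftz (-(2 * (j : ℤ))) c + mulL (zp (-(j : ℤ)) * p) d))
    (h4 : VHolF k d) :
    (∀ (s : ℤ) (r : ℕ), d (s, r) ≠ 0 → 0 ≤ s ∧ s ≤ (k : ℤ) * r) ∧
    (∀ (s : ℤ) (r : ℕ), c (s, r) ≠ 0 → 0 ≤ s ∧ s ≤ (k : ℤ) * r + 2 * j) := by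
  refine ⟨fun s r h => ⟨hd.nonneg_of_ne_zero h, h4 s r h⟩, fun s r h => ?_⟩
  have hcV : VHolF k (shiftz (-(2 * (j : ℤ))) c) := h3.of_add (VHolF.mulL hpV h4)
  have hs := hcV.of_shiftz h
  exact ⟨hc.nonneg_of_ne_zero h, by linarith⟩

/-- Let `p ∈ L` be divisible by `u` with `z⁻ʲ·p` V-holomorphic. If formal power
series `a, b, c, d ∈ ℂ[[z,u]]` are such that all four entries of the `End E`-transform
`(a + zʲp·b + z⁻ʲp·c + p²·d, z²ʲ·b + zʲp·d, z⁻²ʲ·c + z⁻ʲp·d, d)` are V-holomorphic, then every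
monomial `zˢuʳ` of `d` satisfies `0 ≤ s ≤ kr` and every monomial of `c` satisfies
`0 ≤ s ≤ kr + 2j`. -/
theorem endE_section_support_bounds (k : ℕ) (hk : 1 ≤ k) (j : ℕ) (p : L)
    (hu : ∀ (s : ℤ) (r : ℕ), p.coeff (s, r) ≠ 0 → 1 ≤ r)
    (hpV : VHol k (zp (-(j : ℤ)) * p))
    (a b c d : FS) (ha : MemPS a) (hb : MemPS b) (hc : MemPS c) (hd : MemPS d)
    (h1 : VHolF k (a + mulL (zp (j : ℤ) * p) b + mulL (zp (-(j : ℤ)) * p) c + mulL (p * p) d))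
    (h2 : VHolF k (shiftz (2 * (j : ℤ)) b + mulL (zp (j : ℤ) * p) d))
    (h3 : VHolF k (shiftz (-(2 * (j : ℤ))) c + mulL (zp (-(j : ℤ)) * p) d))
    (h4 : VHolF k d) :
    (∀ (s : ℤ) (r : ℕ), d (s, r) ≠ 0 → 0 ≤ s ∧ s ≤ (k : ℤ) * r) ∧
    (∀ (s : ℤ) (r : ℕ), c (s, r) ≠ 0 → 0 ≤ s ∧ s ≤ (k : ℤ) * r + 2 * j) :=
  endE_section_support_bounds_general k j p hpV c d hc hd h3 h4
end
end

section
/- Let p ∈ L be divisible by u. For n ≥ 0 let Γ_n(p) := {(a,b) ∈ (ℂ[z][u]/(u^{n+1}))² : zʲ·a + p·b and z⁻ʲ·b are V-holomorphic modulo u^{n+1}} (the space of sections of the bundle E determined by (j,p) over the n-th infinitesimal neighbourhood of the zero section). Then for every n ≥ 0: dim_ℂ Γ_n(p) ≤ dim_ℂ Γ_n(0); that is, the split bundle (p = 0) has the largest number of holomorphic sections on each infinitesimal neighbourhood. -/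
/-!
A section `(a, b)` of the bundle given by `p` is sent to `(a', b)`, where `a'` keeps only the
monomials `zˢuʳ` of `a` for which `zʲ·zˢuʳ` is V-holomorphic. Since `z⁻ʲ·b` is V-holomorphic,
`(a', b)` is a section of the split bundle. The map is injective: if `b = 0`, then `zʲ·a` itself
is V-holomorphic, so `a' = a`. Finally `Γ_n(0)` is finite-dimensional, as the V-holomorphy of
`zʲ·a` and `z⁻ʲ·b` confines both components to a bounded box of exponents.
-/

noncomputable section

/-- Sections of the bundle `E` determined by `(j,p)` over the n-th infinitesimal neighbourhood
of the zero section: pairs `(a,b)` of polynomials in `ℂ[z][u]/(u^{n+1})` (represented by their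
canonical representatives, supported in u-degrees `≤ n`) such that `zʲ·a + p·b` and `z⁻ʲ·b`
are V-holomorphic modulo `u^{n+1}`. -/
def GammaSet (k j n : ℕ) (p : L) : Set (L × L) :=
  {x | MemPolyRing x.1 ∧ MemPolyRing x.2 ∧
       (∀ (s : ℤ) (r : ℕ), n < r → x.1.coeff (s, r) = 0) ∧
       (∀ (s : ℤ) (r : ℕ), n < r → x.2.coeff (s, r) = 0) ∧
       (∀ (s : ℤ) (r : ℕ), r ≤ n → (zp (j : ℤ) * x.1 + p * x.2).coeff (s, r) ≠ 0 → s ≤ (k : ℤ) * r) ∧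
       (∀ (s : ℤ) (r : ℕ), r ≤ n → (zp (-(j : ℤ)) * x.2).coeff (s, r) ≠ 0 → s ≤ (k : ℤ) * r)}

/-- `Γ_n(p) = H⁰(ℓ⁽ⁿ⁾; E⁽ⁿ⁾)` as a ℂ-subspace of `L × L` (the set `GammaSet` is a subspace,
realised here as its span). -/
def Gamma (k j n : ℕ) (p : L) : Submodule ℂ (L × L) := Submodule.span ℂ (GammaSet k j n p)


open AddMonoidAlgebra

def gammaSubmodule (k j n : ℕ) (p : L) : Submodule ℂ (L × L) :=
  let U := supported ℂ ℂ {q : ℤ × ℕ | 0 ≤ q.1}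
  let N := supported ℂ ℂ {q : ℤ × ℕ | q.2 ≤ n}
  let V := supported ℂ ℂ {q : ℤ × ℕ | q.2 ≤ n → q.1 ≤ k * q.2}
  U.prod U ⊓ N.prod N ⊓ V.comap (LinearMap.mulLeft ℂ (zp j) ∘ₗ LinearMap.fst ℂ L L +
      LinearMap.mulLeft ℂ p ∘ₗ LinearMap.snd ℂ L L) ⊓
    V.comap (LinearMap.mulLeft ℂ (zp (-j)) ∘ₗ LinearMap.snd ℂ L L)

lemma gammaSet_eq_coe_gammaSubmodule (k j n : ℕ) (p : L) :
    GammaSet k j n p = gammaSubmodule k j n p := by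
  ext x
  simp only [GammaSet, gammaSubmodule, MemPolyRing, Set.mem_ofPred_eq, SetLike.mem_coe,
    Submodule.mem_inf, Submodule.mem_prod, Submodule.mem_comap, mem_supported', LinearMap.add_apply,
    LinearMap.comp_apply, LinearMap.mulLeft_apply, LinearMap.fst_apply, LinearMap.snd_apply,
    Prod.forall, not_imp_comm (a := _ = (0 : ℂ)), not_le, Classical.not_imp, and_imp, and_assoc,
    ne_eq]

lemma mem_Gamma {k j n : ℕ} {p : L} {x : L × L} : x ∈ Gamma k j n p ↔ x ∈ GammaSet k j n p := by
  rw [Gamma, gammaSet_eq_coe_gammaSubmodule, Submodule.span_eq, SetLike.mem_coe]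

lemma coeff_zp_mul_add (t s : ℤ) (r : ℕ) (f : L) :
    (zp t * f).coeff (t + s, r) = f.coeff (s, r) := by
  simpa [zp] using coeff_single_mul_add f (1 : ℂ) (t, 0) (s, r)

section

variable {k j n : ℕ} {p : L} {x : L × L}

lemma snd_bound_of_mem_gammaSet (hx : x ∈ GammaSet k j n p) {s : ℤ} {r : ℕ}
    (h : x.2.coeff (s, r) ≠ 0) : 0 ≤ s ∧ s ≤ k * n + j ∧ r ≤ n := by
  obtain ⟨-, hb₀, -, hbₙ, -, hb⟩ := hx
  have hr : r ≤ n := by by_contra! hr; exact h (hbₙ s r hr)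
  have hs : s - j ≤ k * r := hb (s - j) r hr (by rwa [sub_eq_neg_add, coeff_zp_mul_add])
  have : (k * r : ℤ) ≤ k * n := by gcongr
  exact ⟨hb₀ s r h, by omega, hr⟩

lemma fst_bound_of_mem_gammaSet_zero (hx : x ∈ GammaSet k j n 0) {s : ℤ} {r : ℕ}
    (h : x.1.coeff (s, r) ≠ 0) : 0 ≤ s ∧ s + j ≤ k * n ∧ r ≤ n := by
  obtain ⟨ha₀, -, haₙ, -, ha, -⟩ := hx
  have hr : r ≤ n := by by_contra! hr; exact h (haₙ s r hr)
  have hs : j + s ≤ k * r := ha (j + s) r hr (by rwa [zero_mul, add_zero, coeff_zp_mul_add])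
  have : (k * r : ℤ) ≤ k * n := by gcongr
  exact ⟨ha₀ s r h, by omega, hr⟩

def sectionBox (k j n : ℕ) : Set (ℤ × ℕ) := Set.Icc 0 (k * n + j : ℤ) ×ˢ Set.Iic n

lemma gammaSet_zero_subset_supported_prod : GammaSet k j n 0 ⊆
    (supported ℂ ℂ (sectionBox k j n)).prod (supported ℂ ℂ (sectionBox k j n)) := by
  intro x hx
  simp only [SetLike.mem_coe, Submodule.mem_prod, mem_supported, Set.subset_def,
    Finsupp.mem_support_iff, Prod.forall, sectionBox, Set.mem_prod, Set.mem_Icc, Set.mem_Iic]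
  constructor
  · intro s r h
    obtain ⟨h₀, h₁, h₂⟩ := fst_bound_of_mem_gammaSet_zero hx h
    exact ⟨⟨h₀, by omega⟩, h₂⟩
  · intro s r h
    obtain ⟨h₀, h₁, h₂⟩ := snd_bound_of_mem_gammaSet hx h
    exact ⟨⟨h₀, h₁⟩, h₂⟩

instance : FiniteDimensional ℂ (Gamma k j n 0) := by
  have : Finite (sectionBox k j n) := ((Set.finite_Icc _ _).prod (Set.finite_Iic n)).to_subtype
  have hB : (supported ℂ ℂ (sectionBox k j n)).FG :=
    Module.Finite.iff_fg.1 (Module.Finite.equiv (supportedEquivFinsupp _).symm)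
  have : FiniteDimensional ℂ
      ((supported ℂ ℂ (sectionBox k j n)).prod (supported ℂ ℂ (sectionBox k j n))) :=
    Module.Finite.iff_fg.2 (hB.prod hB)
  exact Submodule.finiteDimensional_of_le fun x hx =>
    gammaSet_zero_subset_supported_prod (mem_Gamma.1 hx)

variable (k j) in
def truncVHol : L →ₗ[ℂ] L where
  toFun f := ofCoeff (f.coeff.filter fun q => j + q.1 ≤ k * q.2)
  map_add' _ _ := congrArg ofCoeff Finsupp.filter_add
  map_smul' _ _ := congrArg ofCoeff Finsupp.filter_smul

lemma coeff_truncVHol (f : L) (s : ℤ) (r : ℕ) :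
    (truncVHol k j f).coeff (s, r) = if j + s ≤ k * r then f.coeff (s, r) else 0 :=
  Finsupp.filter_apply ..

lemma truncVHol_mem_gammaSet_zero (hx : x ∈ GammaSet k j n p) :
    (truncVHol k j x.1, x.2) ∈ GammaSet k j n 0 := by
  obtain ⟨ha₀, hb₀, haₙ, hbₙ, -, hb⟩ := hx
  refine ⟨fun s r h => ?_, hb₀, fun s r hr => ?_, hbₙ, fun s r hr h => ?_, hb⟩
  · rw [coeff_truncVHol] at h
    split_ifs at h
    exacts [ha₀ s r h, absurd rfl h]
  · rw [coeff_truncVHol, haₙ s r hr, ite_self]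
  · rw [zero_mul, add_zero, ← add_sub_cancel (j : ℤ) s, coeff_zp_mul_add, coeff_truncVHol] at h
    split_ifs at h with hs
    exacts [by omega, absurd rfl h]

lemma truncVHol_eq_self_of_snd_eq_zero (hx : x ∈ GammaSet k j n p) (hb : x.2 = 0) :
    truncVHol k j x.1 = x.1 := by
  obtain ⟨-, -, haₙ, -, ha, -⟩ := hx
  ext ⟨s, r⟩
  rw [coeff_truncVHol]
  split_ifs with hs
  · rfl
  by_contra h
  have hr : r ≤ n := by by_contra! hr; exact h (haₙ s r hr).symm
  refine hs (ha (j + s) r hr ?_)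
  rwa [hb, mul_zero, add_zero, coeff_zp_mul_add, ne_comm]

variable (k j n p) in
def truncVHolSections : Gamma k j n p →ₗ[ℂ] Gamma k j n 0 :=
  ((truncVHol k j).prodMap LinearMap.id).restrict fun _ hx =>
    mem_Gamma.2 (truncVHol_mem_gammaSet_zero (mem_Gamma.1 hx))

variable (k j n p) in
lemma truncVHolSections_injective : Function.Injective (truncVHolSections k j n p) := by
  rw [← LinearMap.ker_eq_bot, LinearMap.ker_eq_bot']
  rintro ⟨x, hx⟩ h
  have h' : (truncVHol k j x.1, x.2) = 0 := congrArg Subtype.val h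
  have hb : x.2 = 0 := congrArg Prod.snd h'
  have ha : x.1 = 0 := by
    rw [← truncVHol_eq_self_of_snd_eq_zero (mem_Gamma.1 hx) hb]
    exact congrArg Prod.fst h'
  exact Subtype.ext (Prod.ext ha hb)

end

theorem split_has_most_sections_general (k : ℕ) (j : ℕ) (p : L) (n : ℕ) :
    FiniteDimensional ℂ (Gamma k j n p) ∧ FiniteDimensional ℂ (Gamma k j n (0 : L)) ∧
    Module.finrank ℂ (Gamma k j n p) ≤ Module.finrank ℂ (Gamma k j n (0 : L)) := by
  have hinj := truncVHolSections_injective k j n p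
  exact ⟨.of_injective _ hinj, inferInstance, LinearMap.finrank_le_finrank_of_injective hinj⟩

/-- For `p ∈ L` divisible by `u`, the split bundle (`p = 0`) has the largest
number of holomorphic sections on each infinitesimal neighbourhood:
`dim_ℂ Γ_n(p) ≤ dim_ℂ Γ_n(0)` for every `n`. -/
theorem split_has_most_sections (k : ℕ) (hk : 1 ≤ k) (j : ℕ) (p : L)
    (hu : ∀ (s : ℤ) (r : ℕ), p.coeff (s, r) ≠ 0 → 1 ≤ r) (n : ℕ) :
    FiniteDimensional ℂ (Gamma k j n p) ∧ FiniteDimensional ℂ (Gamma k j n (0 : L)) ∧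
    Module.finrank ℂ (Gamma k j n p) ≤ Module.finrank ℂ (Gamma k j n (0 : L)) :=
  split_has_most_sections_general k j p n
end
end
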